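/- Let θ ∈ {0,1/2} and let ε ∈ ℂ with 1+εk ≠ 0 for every integer k. Suppose G: ℤ×(ℤ+θ) → ℂ, H: (ℤ+θ)×ℤ → ℂ, D: (ℤ+θ)×(ℤ+θ) → ℂ satisfy, for all m,n ∈ ℤ and r,s,t ∈ ℤ+θ: G(m,r)(1+2εr) − H(r,m)(1+εm) = (m/2−r)(1+2ε(m+r)); D(r,s)(1+2εs) + D(s,r)(1+2εr) = 2+2ε(r+s); (m−n)G(m+n,r) = G(n,r)G(m,n+r) − G(m,r)G(n,m+r); (m/2−r)H(m+r,n) = H(r,n)G(m,n+r) + n·H(r,m+n); (m/2−r)D(m+r,s) = −(r+s)D(r,s) − G(m,s)D(r,m+s); −2m = H(s,m)D(r,m+s) + H(r,m)D(s,m+r); 2G(r+s,t) = D(s,t)H(r,s+t) + D(r,t)H(s,r+t). Then for all n,m ∈ ℤ and r ∈ ℤ+θ: D(−2n−r, −n−r) = D(r, −n−r), and 1/D(r, m+r) + 1/D(−m−r, −r) = 2. -/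
import Mathlib

/-- membership in ℤ + θ -/
def InZT (θ x : ℂ) : Prop := ∃ k : ℤ, x = (k : ℂ) + θ

/-- under the normalized equations (3.6)–(3.12), equation (3.17) holds: D(−2n−r,−n−r) = D(r,−n−r) and 1/D(r,m+r) + 1/D(−m−r,−r) = 2. -/
theorem D_symmetry_relations (θ ε : ℂ) (hθ : θ = 0 ∨ θ = 1 / 2)
    (hε : ∀ k : ℤ, 1 + ε * (k : ℂ) ≠ 0)
    (G H D : ℂ → ℂ → ℂ)
    (e1 : ∀ (m : ℤ) (r : ℂ), InZT θ r →
      G m r * (1 + 2 * ε * r) - H r m * (1 + ε * (m : ℂ))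
        = ((m : ℂ) / 2 - r) * (1 + 2 * ε * ((m : ℂ) + r)))
    (e2 : ∀ r s : ℂ, InZT θ r → InZT θ s →
      D r s * (1 + 2 * ε * s) + D s r * (1 + 2 * ε * r) = 2 + 2 * ε * (r + s))
    (e3 : ∀ (m n : ℤ) (r : ℂ), InZT θ r →
      ((m : ℂ) - (n : ℂ)) * G ((m : ℂ) + (n : ℂ)) r
        = G n r * G m ((n : ℂ) + r) - G m r * G n ((m : ℂ) + r))
    (e4 : ∀ (m n : ℤ) (r : ℂ), InZT θ r →
      ((m : ℂ) / 2 - r) * H ((m : ℂ) + r) n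
        = H r n * G m ((n : ℂ) + r) + (n : ℂ) * H r ((m : ℂ) + (n : ℂ)))
    (e5 : ∀ (m : ℤ) (r s : ℂ), InZT θ r → InZT θ s →
      ((m : ℂ) / 2 - r) * D ((m : ℂ) + r) s
        = -(r + s) * D r s - G m s * D r ((m : ℂ) + s))
    (e6 : ∀ (m : ℤ) (r s : ℂ), InZT θ r → InZT θ s →
      -2 * (m : ℂ) = H s m * D r ((m : ℂ) + s) + H r m * D s ((m : ℂ) + r))
    (e7 : ∀ r s t : ℂ, InZT θ r → InZT θ s → InZT θ t →
      2 * G (r + s) t = D s t * H r (s + t) + D r t * H s (r + t)) :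
    ∀ (n m : ℤ) (r : ℂ), InZT θ r →
      D (-2 * (n : ℂ) - r) (-(n : ℂ) - r) = D r (-(n : ℂ) - r) ∧
      1 / D r ((m : ℂ) + r) + 1 / D (-(m : ℂ) - r) (-r) = 2 := by
  -- ### membership closure lemmas
  have memN : ∀ x, InZT θ x → InZT θ (-x) := by
    rintro x ⟨k, rfl⟩
    rcases hθ with h | h
    · exact ⟨-k, by rw [h]; push_cast; ring⟩
    · exact ⟨-k - 1, by rw [h]; push_cast; ring⟩
  have memA : ∀ (a : ℤ) (x : ℂ), InZT θ x → InZT θ ((a : ℂ) + x) := by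
    rintro a x ⟨k, rfl⟩
    exact ⟨a + k, by push_cast; ring⟩
  have hsum : ∀ x y, InZT θ x → InZT θ y → ∃ j : ℤ, (j : ℂ) = x + y := by
    rintro x y ⟨k, rfl⟩ ⟨l, rfl⟩
    rcases hθ with h | h
    · exact ⟨k + l, by rw [h]; push_cast; ring⟩
    · exact ⟨k + l + 1, by rw [h]; push_cast; ring⟩
  have hdiff : ∀ x y, InZT θ x → InZT θ y → ∃ j : ℤ, (j : ℂ) = x - y := by
    rintro x y ⟨k, rfl⟩ ⟨l, rfl⟩
    exact ⟨k - l, by push_cast; ring⟩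
  -- ### nonvanishing lemmas
  have nz1 : ∀ x, InZT θ x → (1 : ℂ) + 2 * ε * x ≠ 0 := by
    intro x hx
    obtain ⟨j, hj⟩ := hsum x x hx hx
    intro hc
    exact hε j (by rw [hj]; linear_combination hc)
  have nz1m : ∀ x, InZT θ x → (1 : ℂ) - 2 * ε * x ≠ 0 := by
    intro x hx hc
    exact nz1 (-x) (memN x hx) (by linear_combination hc)
  have nzsum : ∀ x y, InZT θ x → InZT θ y → (1 : ℂ) + ε * (x + y) ≠ 0 := by
    intro x y hx hy
    obtain ⟨j, hj⟩ := hsum x y hx hy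
    intro hc
    exact hε j (by rw [hj]; exact hc)
  -- ### L1 : D r r = 1
  have L1 : ∀ r, InZT θ r → D r r = 1 := by
    intro r hr
    have h := e2 r r hr hr
    have h2 : (D r r - 1) * (2 * (1 + 2 * ε * r)) = 0 := by linear_combination h
    have := (mul_eq_zero.mp h2).resolve_right (mul_ne_zero two_ne_zero (nz1 r hr))
    exact sub_eq_zero.mp this
  -- ### L2 : H r m * D r (m+r) = -m
  have L2 : ∀ (m : ℤ) (r : ℂ), InZT θ r → H r m * D r ((m : ℂ) + r) = -(m : ℂ) := by
    intro m r hr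
    have h := e6 m r r hr hr
    linear_combination (-(1 : ℂ) / 2) * h
  -- ### Dne : D never vanishes
  have Dne : ∀ a b, InZT θ a → InZT θ b → D a b ≠ 0 := by
    intro a b ha hb
    obtain ⟨j, hj⟩ := hdiff b a hb ha
    by_cases hj0 : j = 0
    · have h00 : ((0 : ℤ) : ℂ) = b - a := hj0 ▸ hj
      push_cast at h00
      have hba : b = a := by linear_combination -h00
      rw [hba, L1 a ha]
      exact one_ne_zero
    · have h2 := L2 j a ha
      rw [show (j : ℂ) + a = b by rw [hj]; ring] at h2
      intro h0
      rw [h0, mul_zero] at h2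
      exact (Int.cast_ne_zero.mpr hj0 : ((j : ℤ) : ℂ) ≠ 0) (by linear_combination h2)
  -- ### L4 : D (-r) r = 1
  have L4 : ∀ r, InZT θ r → D (-r) r = 1 := by
    intro r hr
    obtain ⟨j, hj⟩ := hsum r r hr hr
    have hj' : (j : ℂ) = 2 * r := by linear_combination hj
    by_cases hj0 : j = 0
    · have h00 : ((0 : ℤ) : ℂ) = 2 * r := hj0 ▸ hj'
      push_cast at h00
      have hr0 : r = 0 := by linear_combination (-1 / 2 : ℂ) * h00
      rw [hr0, neg_zero]
      exact L1 0 (hr0 ▸ hr)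
    · have hnr := memN r hr
      have h5 := e5 j r (-r) hr hnr
      rw [show (j : ℂ) + -r = r by rw [hj']; ring, L1 r hr, mul_one] at h5
      have hGj : G ((j : ℤ) : ℂ) (-r) = 0 := by
        linear_combination h5 - (D ((j : ℂ) + r) (-r) / 2) * hj'
      have h1 := e1 j (-r) hnr
      rw [hGj, show (j : ℂ) + -r = r by rw [hj']; ring] at h1
      have hH0 : (H (-r) ((j : ℤ) : ℂ) + ((j : ℤ) : ℂ)) * (1 + 2 * ε * r) = 0 := by
        linear_combination -h1 + (-ε * H (-r) ((j : ℤ) : ℂ) + (1 + 2 * ε * r) / 2) * hj'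
      have hHval : H (-r) ((j : ℤ) : ℂ) = -((j : ℤ) : ℂ) := by
        have := (mul_eq_zero.mp hH0).resolve_right (nz1 r hr)
        linear_combination this
      have h2b := L2 j (-r) hnr
      rw [show (j : ℂ) + -r = r by rw [hj']; ring, hHval] at h2b
      have hfin : ((j : ℤ) : ℂ) * (D (-r) r - 1) = 0 := by linear_combination -h2b
      exact sub_eq_zero.mp ((mul_eq_zero.mp hfin).resolve_left (Int.cast_ne_zero.mpr hj0))
  -- ### L5 : D r (-r) = 1
  have L5 : ∀ r, InZT θ r → D r (-r) = 1 := by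
    intro r hr
    have h := e2 r (-r) hr (memN r hr)
    rw [L4 r hr] at h
    have h' : (D r (-r) - 1) * (1 + 2 * ε * (-r)) = 0 := by linear_combination h
    exact sub_eq_zero.mp ((mul_eq_zero.mp h').resolve_right (nz1 (-r) (memN r hr)))
  -- ### L6 : the second relation of (3.17)
  have L6 : ∀ (m : ℤ) (r : ℂ), InZT θ r →
      1 / D r ((m : ℂ) + r) + 1 / D (-(m : ℂ) - r) (-r) = 2 := by
    intro m r hr
    by_cases hm : m = 0
    · subst hm
      have ea : ((0 : ℤ) : ℂ) + r = r := by push_cast; ring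
      have eb : -((0 : ℤ) : ℂ) - r = -r := by push_cast; ring
      rw [ea, eb, L1 r hr, L1 (-r) (memN r hr)]
      norm_num
    · have hs : InZT θ (-(m : ℂ) - r) := by
        have h := memA (-m) (-r) (memN r hr)
        have e : ((-m : ℤ) : ℂ) + -r = -(m : ℂ) - r := by push_cast; ring
        rwa [e] at h
      have h6 := e6 m r (-(m : ℂ) - r) hr hs
      rw [show (m : ℂ) + (-(m : ℂ) - r) = -r by ring, L5 r hr] at h6
      have hd1 : D (-(m : ℂ) - r) ((m : ℂ) + r) = 1 := by
        have := L5 (-(m : ℂ) - r) hs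
        rwa [show -(-(m : ℂ) - r) = (m : ℂ) + r by ring] at this
      rw [hd1] at h6
      have h2a := L2 m r hr
      have h2b := L2 m (-(m : ℂ) - r) hs
      rw [show (m : ℂ) + (-(m : ℂ) - r) = -r by ring] at h2b
      have hX : D r ((m : ℂ) + r) ≠ 0 := Dne r ((m : ℂ) + r) hr (memA m r hr)
      have hW : D (-(m : ℂ) - r) (-r) ≠ 0 := Dne (-(m : ℂ) - r) (-r) hs (memN r hr)
      have key : (m : ℂ) * (D r ((m : ℂ) + r) + D (-(m : ℂ) - r) (-r)
          - 2 * (D r ((m : ℂ) + r) * D (-(m : ℂ) - r) (-r))) = 0 := by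
        linear_combination D (-(m : ℂ) - r) (-r) * h2a + D r ((m : ℂ) + r) * h2b
          + (D r ((m : ℂ) + r) * D (-(m : ℂ) - r) (-r)) * h6
      have hkey2 := (mul_eq_zero.mp key).resolve_left (Int.cast_ne_zero.mpr hm)
      rw [div_add_div _ _ hX hW, div_eq_iff (mul_ne_zero hX hW)]
      linear_combination hkey2
  -- ### keyE : the fundamental quadratic relation from e7
  have keyE : ∀ r s, InZT θ r → InZT θ s →
      (r - s) * (1 + 2 * ε * r) * (D (-s) r) ^ 2 - (r - s) * (2 + 2 * ε * (r - s)) * D (-s) r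
        + 2 * (r + s) * (1 + ε * (r + s)) * D s r
        - (r + 3 * s) * (1 + 2 * ε * r) * (D (-s) r * D s r) = 0 := by
    intro r s hr hs
    have hns := memN s hs
    obtain ⟨j1, hj1⟩ := hdiff r s hr hs
    obtain ⟨j2, hj2⟩ := hsum r s hr hs
    -- H r 0 = 0
    have h20 := L2 0 r hr
    have c0 : ((0 : ℤ) : ℂ) = 0 := by norm_num
    rw [c0, zero_add, neg_zero, L1 r hr, mul_one] at h20
    -- e7 instance
    have h7 := e7 r s (-s) hr hs hns
    rw [show s + -s = (0 : ℂ) by ring, h20, show r + -s = r - s by ring] at h7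
    -- H s (r-s) relation
    have hHs := L2 j1 s hs
    rw [hj1, show r - s + s = r by ring] at hHs
    -- e1 instance at m = r+s
    have h1' := e1 j2 (-s) hns
    rw [hj2] at h1'
    -- H (-s) (r+s) relation
    have hHv := L2 j2 (-s) hns
    rw [hj2, show r + s + -s = r by ring] at hHv
    -- e2 instance
    have h2' := e2 r (-s) hr hns
    linear_combination (2 * D (-s) r * D s r) * h1'
      + (-(1 - 2 * ε * s) * D (-s) r * D s r) * h7
      + (-(1 - 2 * ε * s) * D (-s) r * D r (-s)) * hHs
      + (2 * D s r * (1 + ε * (r + s))) * hHv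
      + ((r - s) * D (-s) r) * h2'
  -- ### L7 : the dichotomy
  have L7 : ∀ r s, InZT θ r → InZT θ s → s ≠ 0 → r ≠ s →
      D s r = 1 ∨ (D s r * (1 + 2 * ε * r) = 2 * ε * (r - s)
        ∧ D (-s) r * (1 + 2 * ε * r) = 2 * ε * (r + s)) := by
    intro r s hr hs hs0 hrs
    have hns := memN s hs
    have hE1 := keyE r s hr hs
    have hE2 := keyE r (-s) hr hns
    rw [neg_neg] at hE2
    set Y := D (-s) r with hYd
    set Z := D s r with hZd
    have hYne : Y ≠ 0 := Dne (-s) r hns hr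
    have hZne : Z ≠ 0 := Dne s r hs hr
    have hRes : (8 * s ^ 2 * (r - s) * (1 + 2 * ε * r) ^ 2 * Y ^ 2)
        * ((Y - 1) * ((1 + 2 * ε * r) * Y - 2 * ε * (r + s))) = 0 := by
      linear_combination
        ((r + s) * (1 + 2 * ε * r) * ((r - s) * (1 + 2 * ε * r) * Y ^ 2 - (r - s) * (2 + 2 * ε * (r - s)) * Y)
          - (r + s) * (1 + 2 * ε * r) * (2 * (r + s) * (1 + ε * (r + s)) - (r + 3 * s) * (1 + 2 * ε * r) * Y) * Z
          - (-((r + s) * (2 + 2 * ε * (r + s))) - (r - 3 * s) * (1 + 2 * ε * r) * Y)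
            * (2 * (r + s) * (1 + ε * (r + s)) - (r + 3 * s) * (1 + 2 * ε * r) * Y)) * hE1
        + (2 * (r + s) * (1 + ε * (r + s)) - (r + 3 * s) * (1 + 2 * ε * r) * Y) ^ 2 * hE2
    have hLne : (8 : ℂ) * s ^ 2 * (r - s) * (1 + 2 * ε * r) ^ 2 * Y ^ 2 ≠ 0 := by
      exact mul_ne_zero (mul_ne_zero (mul_ne_zero (mul_ne_zero (by norm_num)
        (pow_ne_zero 2 hs0)) (sub_ne_zero_of_ne hrs)) (pow_ne_zero 2 (nz1 r hr)))
        (pow_ne_zero 2 hYne)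
    have hfac := (mul_eq_zero.mp hRes).resolve_left hLne
    rcases mul_eq_zero.mp hfac with h | h
    · -- case Y = 1
      have hy : Y = 1 := by linear_combination h
      left
      rw [hy] at hE1
      have hZ1 : ((r - s) * (1 - 2 * ε * s)) * (Z - 1) = 0 := by linear_combination hE1
      have := (mul_eq_zero.mp hZ1).resolve_left
        (mul_ne_zero (sub_ne_zero_of_ne hrs) (nz1m s hs))
      exact sub_eq_zero.mp this
    · -- case (1+2εr)Y = 2ε(r+s)
      have hrsne : r + s ≠ 0 := by
        intro h0
        apply hYne
        have hy0 : (1 + 2 * ε * r) * Y = 0 := by linear_combination h + 2 * ε * h0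
        exact (mul_eq_zero.mp hy0).resolve_left (nz1 r hr)
      have hZ2' : (2 * (r + s) * (1 - 2 * ε * s)) * (Z * (1 + 2 * ε * r) - 2 * ε * (r - s)) = 0 := by
        linear_combination (1 + 2 * ε * r) * hE1
          - ((r - s) * (1 + 2 * ε * r) * Y - (r + 3 * s) * (1 + 2 * ε * r) * Z
            - 2 * (r - s) * (1 - 2 * ε * s)) * h
      have hZ2 := (mul_eq_zero.mp hZ2').resolve_left
        (mul_ne_zero (mul_ne_zero two_ne_zero hrsne) (nz1m s hs))
      right
      exact ⟨by linear_combination hZ2, by linear_combination h⟩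
  -- ### L8 : D a b = 1 when a,b ≠ 0, a ≠ b
  have L8 : ∀ a b, InZT θ a → InZT θ b → a ≠ 0 → b ≠ 0 → a ≠ b → D a b = 1 := by
    intro a b ha hb ha0 hb0 hab
    rcases L7 b a hb ha ha0 (fun hc => hab hc.symm) with h | ⟨h1, _⟩
    · exact h
    · exfalso
      have he2 := e2 a b ha hb
      have hDba : (D b a - 2) * (1 + 2 * ε * a) = 0 := by linear_combination he2 - h1
      have hDba1 : D b a = 2 := by
        have := (mul_eq_zero.mp hDba).resolve_right (nz1 a ha)
        linear_combination this
      rcases L7 a b ha hb hb0 hab with h' | ⟨h3, _⟩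
      · rw [hDba1] at h'; norm_num at h'
      · rw [hDba1] at h3
        exact nzsum a b ha hb (by linear_combination h3 / 2)
  -- ### L9 : D a 0 = 1 (θ = 0 case)
  have L9 : InZT θ 0 → ∀ a, InZT θ a → a ≠ 0 → D a 0 = 1 := by
    intro h0 a ha ha0
    rcases L7 0 a h0 ha ha0 (Ne.symm ha0) with h | ⟨h1, h2⟩
    · exact h
    · exfalso
      have hA : D a 0 = -(2 * ε * a) := by linear_combination h1
      have hB : D (-a) 0 = 2 * ε * a := by linear_combination h2
      have hea : ε * a ≠ 0 := fun hc => Dne a 0 ha h0 (by linear_combination hA - 2 * hc)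
      have h2ea : 2 * ε * a ≠ 0 := fun hc => hea (by linear_combination hc / 2)
      obtain ⟨j, hj⟩ := hdiff a 0 ha h0
      have hja : (j : ℂ) = a := by linear_combination hj
      have h61 := L6 j 0 h0
      rw [show (j : ℂ) + 0 = a by rw [hja]; ring,
        show -(j : ℂ) - 0 = -a by rw [hja]; ring, neg_zero, hB] at h61
      have h62 := L6 (-j) 0 h0
      rw [show ((-j : ℤ) : ℂ) + 0 = -a by push_cast; rw [hja]; ring,
        show -((-j : ℤ) : ℂ) - 0 = a by push_cast; rw [hja]; ring, neg_zero, hA] at h62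
      have hD0a_ne : D 0 a ≠ 0 := Dne 0 a h0 ha
      have hD0na_ne : D 0 (-a) ≠ 0 := Dne 0 (-a) h0 (memN a ha)
      have hv1 := e2 a 0 ha h0
      have hD0a : D 0 a * (1 + 2 * ε * a) = 2 + 4 * ε * a := by linear_combination hv1 - hA
      have hv2 := e2 (-a) 0 (memN a ha) h0
      have hD0na : D 0 (-a) * (1 - 2 * ε * a) = 2 - 4 * ε * a := by linear_combination hv2 - hB
      rw [div_add_div _ _ hD0a_ne h2ea, div_eq_iff (mul_ne_zero hD0a_ne h2ea)] at h61
      rw [div_add_div _ _ hD0na_ne (neg_ne_zero.mpr h2ea),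
        div_eq_iff (mul_ne_zero hD0na_ne (neg_ne_zero.mpr h2ea))] at h62
      have q1 : ((1 : ℂ) - 3 * (ε * a)) * (1 + 2 * (ε * a)) = 0 := by
        linear_combination ((1 + 2 * ε * a) / 2) * h61 - ((1 - 4 * ε * a) / 2) * hD0a
      have q2 : ((1 : ℂ) + 3 * (ε * a)) * (1 - 2 * (ε * a)) = 0 := by
        linear_combination ((1 - 2 * ε * a) / 2) * h62 - ((1 + 4 * ε * a) / 2) * hD0na
      have r1 : (1 : ℂ) - 3 * (ε * a) = 0 :=
        (mul_eq_zero.mp q1).resolve_right (fun hc => nz1 a ha (by linear_combination hc))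
      have r2 : (1 : ℂ) + 3 * (ε * a) = 0 :=
        (mul_eq_zero.mp q2).resolve_right (fun hc => nz1m a ha (by linear_combination hc))
      have : (2 : ℂ) = 0 := by linear_combination r1 + r2
      norm_num at this
  -- ### L10 : D 0 b = 1
  have L10 : InZT θ 0 → ∀ b, InZT θ b → b ≠ 0 → D 0 b = 1 := by
    intro h0 b hb hb0
    have h := e2 b 0 hb h0
    rw [L9 h0 b hb hb0] at h
    have h' : (D 0 b - 1) * (1 + 2 * ε * b) = 0 := by linear_combination h
    exact sub_eq_zero.mp ((mul_eq_zero.mp h').resolve_right (nz1 b hb))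
  -- ### Dall : D ≡ 1
  have Dall : ∀ a b, InZT θ a → InZT θ b → D a b = 1 := by
    intro a b ha hb
    by_cases hab : a = b
    · rw [hab]; exact L1 b hb
    by_cases ha0 : a = 0
    · rw [ha0]
      exact L10 (ha0 ▸ ha) b hb (fun hb0 => hab (by rw [ha0, hb0]))
    by_cases hb0 : b = 0
    · rw [hb0]
      exact L9 (hb0 ▸ hb) a ha ha0
    exact L8 a b ha hb ha0 hb0 hab
  -- ### conclusion
  intro n m r hr
  have hmem1 : InZT θ (-2 * (n : ℂ) - r) := by
    have h := memA (-2 * n) (-r) (memN r hr)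
    have e : ((-2 * n : ℤ) : ℂ) + -r = -2 * (n : ℂ) - r := by push_cast; ring
    rwa [e] at h
  have hmem2 : InZT θ (-(n : ℂ) - r) := by
    have h := memA (-n) (-r) (memN r hr)
    have e : ((-n : ℤ) : ℂ) + -r = -(n : ℂ) - r := by push_cast; ring
    rwa [e] at h
  have hmem3 : InZT θ ((m : ℂ) + r) := memA m r hr
  have hmem4 : InZT θ (-(m : ℂ) - r) := by
    have h := memA (-m) (-r) (memN r hr)
    have e : ((-m : ℤ) : ℂ) + -r = -(m : ℂ) - r := by push_cast; ring
    rwa [e] at h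
  have hmem5 : InZT θ (-r) := memN r hr
  refine ⟨?_, ?_⟩
  · rw [Dall _ _ hmem1 hmem2, Dall _ _ hr hmem2]
  · rw [Dall _ _ hr hmem3, Dall _ _ hmem4 hmem5]
    norm_num
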